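/- If X(ℝⁿ) is a Banach function space satisfying the A_X-condition sup_Q (1/|Q|) ‖χ_Q‖_X ‖χ_Q‖_{X'} < ∞ (supremum over axis-parallel cubes Q), then X(ℝⁿ) satisfies the doubling property: for every τ > 1 there is C_τ > 0 with ‖χ_{B(y,τR)}‖_X ≤ C_τ ‖χ_{B(y,R)}‖_X for all y ∈ ℝⁿ and all R > 0. -/

import Mathlib

open MeasureTheory Filter ENNReal Metric

noncomputable section

/-- A Banach function norm on measurable functions over a measure space `α`,
following Bennett–Sharpley: axioms (A1)–(A5). -/
structure BanachFunctionNorm (α : Type) [MeasureSpace α] where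
  ρ : (α → ℝ≥0∞) → ℝ≥0∞
  ρ_zero : ∀ f, ρ f = 0 ↔ f =ᵐ[volume] 0
  ρ_smul : ∀ (a : NNReal) (f : α → ℝ≥0∞), ρ (fun x => (a : ℝ≥0∞) * f x) = a * ρ f
  ρ_add : ∀ f g, ρ (fun x => f x + g x) ≤ ρ f + ρ g
  ρ_mono : ∀ f g, (∀ᵐ x ∂volume, f x ≤ g x) → ρ f ≤ ρ g
  ρ_fatou : ∀ (f : ℕ → α → ℝ≥0∞),
      (∀ j, ∀ᵐ x ∂volume, f j x ≤ f (j+1) x) →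
      ρ (fun x => ⨆ j, f j x) = ⨆ j, ρ (f j)
  ρ_finite : ∀ E : Set α, MeasurableSet E → volume E < ⊤ → ρ (E.indicator 1) < ⊤
  ρ_loc_embed : ∀ E : Set α, MeasurableSet E → volume E < ⊤ →
      ∃ C : ℝ≥0∞, C < ⊤ ∧ ∀ f : α → ℝ≥0∞, ∫⁻ x in E, f x ∂volume ≤ C * ρ f

/-- The associate (Köthe dual) norm of a Banach function norm. -/
def BanachFunctionNorm.associate {α : Type} [MeasureSpace α]
    (X : BanachFunctionNorm α) (g : α → ℝ≥0∞) : ℝ≥0∞ :=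
  ⨆ f ∈ {f : α → ℝ≥0∞ | X.ρ f ≤ 1}, ∫⁻ x, f x * g x ∂volume

/-- An axis-parallel cube with corner `a` and side length `h`. -/
def axisCube {n : ℕ} (a : EuclideanSpace ℝ (Fin n)) (h : ℝ) :
    Set (EuclideanSpace ℝ (Fin n)) :=
  {x | ∀ i : Fin n, x i ∈ Set.Icc (a i) (a i + h)}

/-!
Testing the associate norm of `χ_Q` against `χ_E / ‖χ_E‖_X` gives Hölder's inequality
`|E| ≤ ‖χ_E‖_X ‖χ_Q‖_{X'}` for `E ⊆ Q`, so the `A_X` bound on `Q` yields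
`‖χ_Q‖_X |E| ≤ C |Q| ‖χ_E‖_X`. Take for `Q` the cube circumscribing `B(y, τR)` and `E = B(y, R)`:
`‖χ_{B(y,τR)}‖_X ≤ ‖χ_Q‖_X` by monotonicity, and `|Q| ≤ (√n τ)ⁿ |B(y, R)|` because
`Q ⊆ B̄(y, √n τR)`.
-/

namespace BanachFunctionNorm

variable {α : Type} [MeasureSpace α] (X : BanachFunctionNorm α)

theorem rho_indicator_mono {s t : Set α} (hst : s ⊆ t) :
    X.ρ (s.indicator 1) ≤ X.ρ (t.indicator 1) :=
  X.ρ_mono _ _ (ae_of_all _ (Set.indicator_le_indicator_of_subset hst fun _ => zero_le))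

theorem lintegral_mul_le_rho_mul_associate {f : α → ℝ≥0∞} (hf : X.ρ f ≠ ⊤)
    (g : α → ℝ≥0∞) : ∫⁻ x, f x * g x ≤ X.ρ f * X.associate g := by
  rcases eq_or_ne (X.ρ f) 0 with hf0 | hf0
  · have hfg : (fun x => f x * g x) =ᵐ[volume] 0 := by
      filter_upwards [(X.ρ_zero f).mp hf0] with x hx
      simp [hx]
    simp [lintegral_congr_ae hfg]
  -- normalise `f` to the unit ball of `X`
  set c : NNReal := (X.ρ f)⁻¹.toNNReal
  have hc : (c : ℝ≥0∞) = (X.ρ f)⁻¹ := ENNReal.coe_toNNReal (ENNReal.inv_ne_top.mpr hf0)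
  have hcf : X.ρ (fun x => (c : ℝ≥0∞) * f x) ≤ 1 := by
    rw [X.ρ_smul, hc, ENNReal.inv_mul_cancel hf0 hf]
  calc ∫⁻ x, f x * g x
      = X.ρ f * ∫⁻ x, (c : ℝ≥0∞) * f x * g x := by
        simp_rw [mul_assoc, lintegral_const_mul' _ _ ENNReal.coe_ne_top, ← mul_assoc, hc,
          ENNReal.mul_inv_cancel hf0 hf, one_mul]
    _ ≤ X.ρ f * X.associate g := by
        gcongr
        exact le_iSup₂_of_le (f := fun f (_ : X.ρ f ≤ 1) => ∫⁻ x, f x * g x)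
          (fun x => (c : ℝ≥0∞) * f x) hcf le_rfl

theorem volume_le_rho_indicator_mul_associate {E F : Set α} (hE : MeasurableSet E)
    (hEfin : volume E ≠ ⊤) (hEF : E ⊆ F) :
    volume E ≤ X.ρ (E.indicator 1) * X.associate (F.indicator 1) := by
  have hEF_ind : (fun x => E.indicator 1 x * F.indicator 1 x) = E.indicator (1 : α → ℝ≥0∞) := by
    ext x
    by_cases hx : x ∈ E
    · simp [hx, hEF hx]
    · simp [hx]
  calc volume E = ∫⁻ x, E.indicator 1 x * F.indicator 1 x := by
        rw [hEF_ind, lintegral_indicator_one hE]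
    _ ≤ _ := X.lintegral_mul_le_rho_mul_associate
        (X.ρ_finite E hE hEfin.lt_top).ne _

theorem rho_indicator_mul_volume_le {E F : Set α} {C : ℝ≥0∞} (hE : MeasurableSet E)
    (hEfin : volume E ≠ ⊤) (hEF : E ⊆ F)
    (hF : X.ρ (F.indicator 1) * X.associate (F.indicator 1) ≤ C * volume F) :
    X.ρ (F.indicator 1) * volume E ≤ C * volume F * X.ρ (E.indicator 1) :=
  calc X.ρ (F.indicator 1) * volume E
      ≤ X.ρ (F.indicator 1) * (X.ρ (E.indicator 1) * X.associate (F.indicator 1)) := by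
        gcongr
        exact X.volume_le_rho_indicator_mul_associate hE hEfin hEF
    _ = X.ρ (F.indicator 1) * X.associate (F.indicator 1) * X.ρ (E.indicator 1) := by ring
    _ ≤ C * volume F * X.ρ (E.indicator 1) := by gcongr

end BanachFunctionNorm

theorem EuclideanSpace.dist_le_sqrt_card_mul {ι : Type*} [Fintype ι] {x y : EuclideanSpace ℝ ι}
    {t : ℝ} (ht : 0 ≤ t) (hxy : ∀ i, |x i - y i| ≤ t) :
    dist x y ≤ √(Fintype.card ι) * t := by
  rw [EuclideanSpace.dist_eq, ← Real.sqrt_sq ht, ← Real.sqrt_mul (Nat.cast_nonneg _)]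
  gcongr
  calc ∑ i, dist (x i) (y i) ^ 2 ≤ ∑ _i : ι, t ^ 2 := by
        gcongr with i
        rw [Real.dist_eq]
        exact hxy i
    _ = Fintype.card ι * t ^ 2 := by simp

/-- The cube with center `y` and half side length `r`. -/
def centeredCube {n : ℕ} (y : EuclideanSpace ℝ (Fin n)) (r : ℝ) : Set (EuclideanSpace ℝ (Fin n)) :=
  axisCube (WithLp.toLp 2 fun i => y i - r) (2 * r)

theorem mem_centeredCube {n : ℕ} {x y : EuclideanSpace ℝ (Fin n)} {r : ℝ} :
    x ∈ centeredCube y r ↔ ∀ i, |x i - y i| ≤ r := by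
  simp only [centeredCube, axisCube, Set.mem_ofPred_eq, Set.mem_Icc, abs_le]
  refine forall_congr' fun i => ?_
  constructor <;> rintro ⟨h₁, h₂⟩ <;> constructor <;> linarith

theorem ball_subset_centeredCube {n : ℕ} (y : EuclideanSpace ℝ (Fin n)) (r : ℝ) :
    ball y r ⊆ centeredCube y r := fun x hx =>
  mem_centeredCube.mpr fun i =>
    ((Real.dist_eq _ _).symm.trans_le (PiLp.dist_apply_le x y i)).trans (mem_ball.mp hx).le

theorem centeredCube_subset_closedBall {n : ℕ} (y : EuclideanSpace ℝ (Fin n)) {r : ℝ}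
    (hr : 0 ≤ r) : centeredCube y r ⊆ closedBall y (√n * r) := fun x hx => by
  simpa using EuclideanSpace.dist_le_sqrt_card_mul hr (mem_centeredCube.mp hx)

theorem EuclideanSpace.volume_closedBall_mul {n : ℕ} (y : EuclideanSpace ℝ (Fin n)) {s R : ℝ}
    (hs : 0 ≤ s) (hR : 0 < R) :
    volume (closedBall y (s * R)) = ENNReal.ofReal (s ^ n) * volume (ball y R) := by
  rw [Measure.addHaar_closedBall _ _ (by positivity), Measure.addHaar_ball_of_pos _ _ hR,
    finrank_euclideanSpace_fin, mul_pow, ENNReal.ofReal_mul (by positivity), mul_assoc]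

theorem volume_centeredCube_le {n : ℕ} (y : EuclideanSpace ℝ (Fin n)) {τ R : ℝ} (hτ : 0 ≤ τ)
    (hR : 0 < R) :
    volume (centeredCube y (τ * R)) ≤ ENNReal.ofReal ((√n * τ) ^ n) * volume (ball y R) :=
  calc volume (centeredCube y (τ * R)) ≤ volume (closedBall y (√n * τ * R)) := by
        rw [mul_assoc]
        exact measure_mono (centeredCube_subset_closedBall y (by positivity))
    _ = _ := EuclideanSpace.volume_closedBall_mul y (by positivity) hR

/-- If a Banach function space `X(ℝⁿ)` satisfies the `A_X`-condition
`sup_Q (1/|Q|) ‖χ_Q‖_X ‖χ_Q‖_{X'} < ∞` over axis-parallel cubes `Q`,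
then `X(ℝⁿ)` satisfies the doubling property for every `τ > 1`. -/
theorem AX_condition_implies_doubling {n : ℕ}
    (X : BanachFunctionNorm (EuclideanSpace ℝ (Fin n)))
    (hAX : ∃ C : ℝ≥0∞, C < ⊤ ∧ ∀ (a : EuclideanSpace ℝ (Fin n)) (h : ℝ), 0 < h →
      X.ρ ((axisCube a h).indicator 1) * X.associate ((axisCube a h).indicator 1)
        ≤ C * volume (axisCube a h)) :
    ∀ τ : ℝ, 1 < τ → ∃ Cτ : ℝ≥0∞, 0 < Cτ ∧ Cτ < ⊤ ∧
      ∀ (y : EuclideanSpace ℝ (Fin n)) (R : ℝ), 0 < R →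
        X.ρ ((Metric.ball y (τ * R)).indicator 1)
          ≤ Cτ * X.ρ ((Metric.ball y R).indicator 1) := by
  obtain ⟨C, hC, hA⟩ := hAX
  intro τ hτ
  set K := ENNReal.ofReal ((√n * τ) ^ n)
  refine ⟨C * K + 1, by positivity, by finiteness, fun y R hR => ?_⟩
  set Q := centeredCube y (τ * R)
  have hτBQ : ball y (τ * R) ⊆ Q := ball_subset_centeredCube y _
  have hBQ : ball y R ⊆ Q := (ball_subset_ball (by nlinarith)).trans hτBQ
  have hQB : X.ρ (Q.indicator 1) ≤ C * K * X.ρ ((ball y R).indicator 1) := by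
    rw [← ENNReal.mul_le_mul_iff_left (measure_ball_pos volume y hR).ne'
      (measure_ball_lt_top (μ := volume)).ne]
    calc X.ρ (Q.indicator 1) * volume (ball y R)
        ≤ C * volume Q * X.ρ ((ball y R).indicator 1) :=
          X.rho_indicator_mul_volume_le measurableSet_ball
            (measure_ball_lt_top (μ := volume)).ne hBQ (hA _ _ (by nlinarith))
      _ ≤ C * (K * volume (ball y R)) * X.ρ ((ball y R).indicator 1) := by
          gcongr
          exact volume_centeredCube_le y (by linarith) hR
      _ = C * K * X.ρ ((ball y R).indicator 1) * volume (ball y R) := by ring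
  calc X.ρ ((ball y (τ * R)).indicator 1) ≤ X.ρ (Q.indicator 1) := X.rho_indicator_mono hτBQ
    _ ≤ C * K * X.ρ ((ball y R).indicator 1) := hQB
    _ ≤ (C * K + 1) * X.ρ ((ball y R).indicator 1) := by gcongr; exact le_self_add
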